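/- Let ρ and σ be density operators on a finite-dimensional complex Hilbert space with supp(ρ) ⊆ supp(σ), let α > 1 with conjugate index α' = α/(α−1), and let T be a positive semidefinite operator with Tr[ρT] > 0. Then Tr[ρT] ≤ exp( ((α−1)/α) D_α^*(ρ‖σ) ) · ( Tr[( σ^{1/(2α')} T σ^{1/(2α')} )^{α'}] )^{1/α'}; equivalently, D_α^*(ρ‖σ) ≥ α' log Tr[ρT] − log Tr[( σ^{1/(2α')} T σ^{1/(2α')} )^{α'}]. -/

import Mathlib

open Matrix
open scoped ComplexOrder Kronecker

noncomputable section

/-- Real power of a Hermitian matrix via functional calculus on its support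
(Moore–Penrose convention); junk value `0` for non-Hermitian input. -/
def Matrix.rpowH {ι : Type*} [Fintype ι] [DecidableEq ι] (A : Matrix ι ι ℂ) (p : ℝ) :
    Matrix ι ι ℂ :=
  if hA : A.IsHermitian then
    (hA.eigenvectorUnitary : Matrix ι ι ℂ) *
      Matrix.diagonal (fun i => ((hA.eigenvalues i ^ p : ℝ) : ℂ)) *
      star (hA.eigenvectorUnitary : Matrix ι ι ℂ)
  else 0

/-- Real part of the trace. -/
def retr {ι : Type*} [Fintype ι] (A : Matrix ι ι ℂ) : ℝ :=
  (Matrix.trace A).re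

/-- Sandwiched Rényi divergence
`D_α^*(ρ‖σ) = (α-1)⁻¹ log Tr[(σ^{(1-α)/(2α)} ρ σ^{(1-α)/(2α)})^α]`. -/
def sandwichedRenyiDiv {ι : Type*} [Fintype ι] [DecidableEq ι]
    (α : ℝ) (ρ σ : Matrix ι ι ℂ) : ℝ :=
  (α - 1)⁻¹ * Real.log (retr (Matrix.rpowH
    (Matrix.rpowH σ ((1 - α) / (2 * α)) * ρ * Matrix.rpowH σ ((1 - α) / (2 * α))) α))


/-!
Put `A = σ^{-1/(2α')} ρ σ^{-1/(2α')}` (note `(1-α)/(2α) = -1/(2α')`) and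
`B = σ^{1/(2α')} T σ^{1/(2α')}`. The product `σ^{-1/(2α')} σ^{1/(2α')}` is the support
projection of `σ`, which fixes `ρ` because `supp ρ ⊆ supp σ`; hence `Tr[ρT] = Tr[AB]`.
For positive semidefinite `A, B` with eigenbases `U, V`, one has
`Tr[AB] = ∑ᵢⱼ aᵢ bⱼ |(U⋆V)ᵢⱼ|²`, and `(|(U⋆V)ᵢⱼ|²)` is doubly stochastic, so the scalar
Hölder inequality gives `Tr[AB] ≤ (Tr A^α)^{1/α} (Tr B^{α'})^{1/α'}`. The first factor is at
most `exp(((α-1)/α) D_α^*(ρ‖σ))`, and the logarithmic form follows by taking logarithms.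
-/

open scoped MatrixOrder

namespace Matrix

theorem normSq_mem_doublyStochastic {ι : Type*} [Fintype ι] [DecidableEq ι]
    {U : Matrix ι ι ℂ} (hU : U ∈ unitaryGroup ι ℂ) :
    of (fun i j => Complex.normSq (U i j)) ∈ doublyStochastic ℝ ι := by
  refine mem_doublyStochastic_iff_sum.2
    ⟨fun i j => Complex.normSq_nonneg _, fun i => ?_, fun j => ?_⟩
  · have hrow := congr_fun₂ (mem_unitaryGroup_iff.1 hU) i i
    simp only [mul_apply, star_apply, one_apply_eq, Complex.star_def, Complex.mul_conj] at hrow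
    exact_mod_cast hrow
  · have hcol := congr_fun₂ (mem_unitaryGroup_iff'.1 hU) j j
    simp only [mul_apply, star_apply, one_apply_eq, Complex.star_def,
      ← Complex.normSq_eq_conj_mul_self] at hcol
    exact_mod_cast hcol

theorem inner_le_Lp_mul_Lq_of_mem_doublyStochastic {ι : Type*} [Fintype ι] [DecidableEq ι]
    {c : Matrix ι ι ℝ} (hc : c ∈ doublyStochastic ℝ ι) {a b : ι → ℝ} (ha : ∀ i, 0 ≤ a i)
    (hb : ∀ j, 0 ≤ b j) {p q : ℝ} (hpq : p.HolderConjugate q) :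
    ∑ i, ∑ j, a i * b j * c i j ≤ (∑ i, a i ^ p) ^ (1 / p) * (∑ j, b j ^ q) ^ (1 / q) := by
  have hc0 (i j : ι) : 0 ≤ c i j := nonneg_of_mem_doublyStochastic hc
  have hsplit (i j : ι) :
      (c i j ^ (1 / p) * a i) * (c i j ^ (1 / q) * b j) = a i * b j * c i j := by
    rw [mul_mul_mul_comm, ← Real.rpow_add' (hc0 i j) (by rw [hpq.one_div_add_one_div]; norm_num),
      hpq.one_div_add_one_div, div_one, Real.rpow_one]
    ring
  have hpow {r : ℝ} (hr : r ≠ 0) (i j : ι) {x : ℝ} (hx : 0 ≤ x) :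
      (c i j ^ (1 / r) * x) ^ r = c i j * x ^ r := by
    rw [Real.mul_rpow (Real.rpow_nonneg (hc0 i j) _) hx, ← Real.rpow_mul (hc0 i j),
      one_div_mul_cancel hr, Real.rpow_one]
  have holder := Real.inner_le_Lp_mul_Lq_of_nonneg (Finset.univ : Finset (ι × ι))
    (f := fun x => c x.1 x.2 ^ (1 / p) * a x.1) (g := fun x => c x.1 x.2 ^ (1 / q) * b x.2) hpq
    (fun x _ => mul_nonneg (Real.rpow_nonneg (hc0 _ _) _) (ha _))
    (fun x _ => mul_nonneg (Real.rpow_nonneg (hc0 _ _) _) (hb _))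
  simp only [Fintype.sum_prod_type, hsplit, hpow hpq.ne_zero _ _ (ha _),
    hpow hpq.symm.ne_zero _ _ (hb _)] at holder
  have hrows : ∑ i, ∑ j, c i j * a i ^ p = ∑ i, a i ^ p := by
    simp only [← Finset.sum_mul, sum_row_of_mem_doublyStochastic hc, one_mul]
  have hcols : ∑ i, ∑ j, c i j * b j ^ q = ∑ j, b j ^ q := by
    rw [Finset.sum_comm]
    simp only [← Finset.sum_mul, sum_col_of_mem_doublyStochastic hc, one_mul]
  rwa [hrows, hcols] at holder

theorem mul_eq_zero_of_ker_subset {R m n k o : Type*} [CommSemiring R] [Fintype n]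
    [Fintype o] [DecidableEq o] {ρ : Matrix m n R} {σ : Matrix k n R}
    (hker : ∀ v, σ *ᵥ v = 0 → ρ *ᵥ v = 0) {M : Matrix n o R} (h : σ * M = 0) : ρ * M = 0 :=
  ext_of_mulVec_single fun j => by
    rw [← mulVec_mulVec, hker _ (by rw [mulVec_mulVec, h, zero_mulVec]), zero_mulVec]

variable {ι : Type*} [Fintype ι]

theorem PosSemidef.retr_nonneg {A : Matrix ι ι ℂ} (hA : A.PosSemidef) : 0 ≤ retr A :=
  (Complex.nonneg_iff.1 hA.trace_nonneg).1

variable [DecidableEq ι]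

theorem IsHermitian.rpowH_eq_cfc {A : Matrix ι ι ℂ} (hA : A.IsHermitian) (p : ℝ) :
    A.rpowH p = cfc (fun x : ℝ => x ^ p) A := by
  rw [hA.cfc_eq, IsHermitian.cfc, Unitary.conjStarAlgAut_apply, rpowH, dif_pos hA]
  rfl

theorem IsHermitian.rpowH_mul_rpowH {A : Matrix ι ι ℂ} (hA : A.IsHermitian) (p q : ℝ) :
    A.rpowH p * A.rpowH q = cfc (fun x : ℝ => x ^ p * x ^ q) A := by
  rw [hA.rpowH_eq_cfc, hA.rpowH_eq_cfc, cfc_mul _ _ A (A.finite_real_spectrum.continuousOn _)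
    (A.finite_real_spectrum.continuousOn _)]

theorem IsHermitian.retr_rpowH {A : Matrix ι ι ℂ} (hA : A.IsHermitian) (p : ℝ) :
    retr (A.rpowH p) = ∑ i, hA.eigenvalues i ^ p := by
  rw [retr, rpowH, dif_pos hA, trace_mul_cycle, Unitary.coe_star_mul_self, one_mul,
    trace_diagonal, Complex.re_sum]
  simp

theorem PosSemidef.rpowH {A : Matrix ι ι ℂ} (hA : A.PosSemidef) (p : ℝ) :
    (A.rpowH p).PosSemidef := by
  rw [hA.isHermitian.rpowH_eq_cfc]
  exact (cfc_nonneg fun x hx => Real.rpow_nonneg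
    (spectrum_nonneg_of_nonneg hA.nonneg hx) p).posSemidef

theorem PosSemidef.rpowH_mul_mul_rpowH {A B : Matrix ι ι ℂ} (hA : A.PosSemidef)
    (hB : B.PosSemidef) (p : ℝ) : (B.rpowH p * A * B.rpowH p).PosSemidef := by
  simpa only [(hB.rpowH p).isHermitian.eq] using hA.mul_mul_conjTranspose_same (B.rpowH p)

theorem PosSemidef.mul_rpowH_mul_rpowH_of_add_eq_zero {A : Matrix ι ι ℂ} (hA : A.PosSemidef)
    {p q : ℝ} (hpq : p + q = 0) : A * (A.rpowH p * A.rpowH q) = A := by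
  have hspec : (spectrum ℝ A).EqOn (fun x => x * (x ^ p * x ^ q)) (fun x => x) := by
    intro x hx
    rcases (spectrum_nonneg_of_nonneg hA.nonneg hx).eq_or_lt with rfl | hx
    · simp
    · simp only [← Real.rpow_add hx, hpq, Real.rpow_zero, mul_one]
  calc A * (A.rpowH p * A.rpowH q)
      = cfc (fun x : ℝ => x * (x ^ p * x ^ q)) A := by
        rw [hA.isHermitian.rpowH_mul_rpowH, cfc_mul (fun x : ℝ => x) _ A continuousOn_id
          (A.finite_real_spectrum.continuousOn _), cfc_id' ℝ A]
    _ = A := by rw [cfc_congr hspec, cfc_id' ℝ A]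

theorem trace_sandwich_mul_sandwich {ρ σ : Matrix ι ι ℂ} (hρ : ρ.IsHermitian)
    (hσ : σ.PosSemidef) (hker : ∀ v, σ *ᵥ v = 0 → ρ *ᵥ v = 0) (T : Matrix ι ι ℂ)
    {p q : ℝ} (hpq : p + q = 0) :
    ((σ.rpowH p * ρ * σ.rpowH p) * (σ.rpowH q * T * σ.rpowH q)).trace = (ρ * T).trace := by
  -- `P` is the projection onto the support of `σ`
  set P := σ.rpowH p * σ.rpowH q
  have hP : P = σ.rpowH q * σ.rpowH p := by
    simp only [P, hσ.isHermitian.rpowH_mul_rpowH, mul_comm]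
  have hρP : ρ * P = ρ := by
    have h := mul_eq_zero_of_ker_subset hker (M := 1 - P)
      (by rw [mul_sub, mul_one, hσ.mul_rpowH_mul_rpowH_of_add_eq_zero hpq, sub_self])
    rwa [mul_sub, mul_one, sub_eq_zero, eq_comm] at h
  have hPρ : P * ρ = ρ := by
    have hPsa : IsSelfAdjoint P := by
      simp only [P, hσ.isHermitian.rpowH_mul_rpowH]
      exact cfc_predicate _ σ
    simpa only [star_mul, hPsa.star_eq, hρ.star_eq] using congr_arg star hρP
  calc ((σ.rpowH p * ρ * σ.rpowH p) * (σ.rpowH q * T * σ.rpowH q)).trace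
      = (σ.rpowH q * σ.rpowH p * ρ * P * T).trace := by
        rw [← mul_assoc, trace_mul_comm]
        simp only [P, mul_assoc]
    _ = (ρ * T).trace := by rw [← hP, hPρ, hρP]

theorem IsHermitian.trace_mul_eq_sum_eigenvalues {A B : Matrix ι ι ℂ} (hA : A.IsHermitian)
    (hB : B.IsHermitian) :
    (A * B).trace = ((∑ i, ∑ j, hA.eigenvalues i * hB.eigenvalues j *
      Complex.normSq ((star (hA.eigenvectorUnitary : Matrix ι ι ℂ) *
        hB.eigenvectorUnitary) i j) : ℝ) : ℂ) := by
  set U := (hA.eigenvectorUnitary : Matrix ι ι ℂ)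
  set W := star U * hB.eigenvectorUnitary
  have hAB : A * B = U * (diagonal (RCLike.ofReal ∘ hA.eigenvalues) * W *
      diagonal (RCLike.ofReal ∘ hB.eigenvalues) * star W) * star U := by
    conv_lhs => rw [hA.spectral_theorem, hB.spectral_theorem]
    simp only [Unitary.conjStarAlgAut_apply, W, star_mul, star_star, mul_assoc,
      Unitary.mul_star_self_of_mem hA.eigenvectorUnitary.2, mul_one, U]
  rw [hAB, trace_mul_cycle, Unitary.coe_star_mul_self, one_mul, trace]
  simp only [diag_apply, mul_apply, diagonal_apply, Function.comp_apply, star_apply,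
    RCLike.ofReal_eq_complex_ofReal, mul_ite, mul_zero, ite_mul, zero_mul, Finset.sum_ite_eq,
    Finset.sum_ite_eq', Finset.mem_univ, if_true]
  push_cast
  refine Finset.sum_congr rfl fun i _ => Finset.sum_congr rfl fun j _ => ?_
  rw [← Complex.mul_conj, Complex.star_def]
  ring

theorem PosSemidef.retr_mul_le_Lp_mul_Lq {A B : Matrix ι ι ℂ} (hA : A.PosSemidef)
    (hB : B.PosSemidef) {p q : ℝ} (hpq : p.HolderConjugate q) :
    retr (A * B) ≤ retr (A.rpowH p) ^ (1 / p) * retr (B.rpowH q) ^ (1 / q) := by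
  rw [hA.isHermitian.retr_rpowH, hB.isHermitian.retr_rpowH, retr,
    hA.isHermitian.trace_mul_eq_sum_eigenvalues hB.isHermitian, Complex.ofReal_re]
  exact inner_le_Lp_mul_Lq_of_mem_doublyStochastic
    (normSq_mem_doublyStochastic
      (star hA.isHermitian.eigenvectorUnitary * hB.isHermitian.eigenvectorUnitary).2)
    hA.eigenvalues_nonneg hB.eigenvalues_nonneg hpq

end Matrix

namespace Real

-- Equality for `t > 0`; at `t = 0` the right side is `exp 0 = 1` because `log 0 = 0`.
theorem rpow_one_div_le_exp_log_div {t : ℝ} (ht : 0 ≤ t) (a : ℝ) :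
    t ^ (1 / a) ≤ exp (log t / a) := by
  rcases ht.eq_or_lt with rfl | ht
  · by_cases ha : a = 0 <;> simp [ha, zero_rpow]
  · rw [rpow_def_of_pos ht, mul_one_div]

theorem mul_log_sub_log_le {x t D a : ℝ} (hx : 0 < x) (ht : 0 ≤ t) (ha : 0 < a)
    (h : x ≤ exp (D / a) * t ^ (1 / a)) : a * log x - log t ≤ D := by
  have ht : 0 < t := by
    refine ht.lt_of_ne fun ht0 => ?_
    rw [← ht0, zero_rpow (one_div_ne_zero ha.ne'), mul_zero] at h
    linarith
  have hlog : log x ≤ D / a + log t / a :=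
    calc log x ≤ log (exp (D / a) * t ^ (1 / a)) := log_le_log hx h
      _ = D / a + log t / a := by
        rw [log_mul (exp_pos _).ne' (rpow_pos_of_pos ht _).ne', log_exp, log_rpow ht,
          one_div_mul_eq_div]
  have := mul_le_mul_of_nonneg_left hlog ha.le
  rw [mul_add, mul_div_cancel₀ _ ha.ne', mul_div_cancel₀ _ ha.ne'] at this
  linarith

end Real

theorem sandwiched_holder_bound_general
    {ι : Type*} [Fintype ι] [DecidableEq ι]
    (ρ σ : Matrix ι ι ℂ)
    (hρ : ρ.PosSemidef)
    (hσ : σ.PosSemidef)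
    (hsupp : ∀ v : ι → ℂ, σ.mulVec v = 0 → ρ.mulVec v = 0)
    (α : ℝ) (hα : 1 < α) (α' : ℝ) (hα' : α' = α / (α - 1))
    (T : Matrix ι ι ℂ) (hT : T.PosSemidef) (hTρ : 0 < retr (ρ * T)) :
    retr (ρ * T) ≤
      Real.exp ((α - 1) / α * sandwichedRenyiDiv α ρ σ) *
        (retr (Matrix.rpowH
          (Matrix.rpowH σ (1 / (2 * α')) * T * Matrix.rpowH σ (1 / (2 * α'))) α'))
          ^ (1 / α') ∧
    α' * Real.log (retr (ρ * T)) -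
        Real.log (retr (Matrix.rpowH
          (Matrix.rpowH σ (1 / (2 * α')) * T * Matrix.rpowH σ (1 / (2 * α'))) α')) ≤
      sandwichedRenyiDiv α ρ σ := by
  have hconj : α.HolderConjugate α' := (Real.holderConjugate_iff_eq_conjExponent hα).2 hα'
  have hexps : (1 - α) / (2 * α) + 1 / (2 * α') = 0 := by
    rw [hα']; field_simp [hconj.ne_zero, hconj.sub_one_ne_zero]; ring
  set A := σ.rpowH ((1 - α) / (2 * α)) * ρ * σ.rpowH ((1 - α) / (2 * α))
  set B := σ.rpowH (1 / (2 * α')) * T * σ.rpowH (1 / (2 * α'))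
  have hB : B.PosSemidef := hT.rpowH_mul_mul_rpowH hσ _
  have hexp :
      retr (A.rpowH α) ^ (1 / α) ≤ Real.exp ((α - 1) / α * sandwichedRenyiDiv α ρ σ) := by
    convert Real.rpow_one_div_le_exp_log_div
      ((hρ.rpowH_mul_mul_rpowH hσ _).rpowH α).retr_nonneg α using 2
    rw [sandwichedRenyiDiv]; field_simp [hconj.ne_zero, hconj.sub_one_ne_zero]
  have hbound : retr (ρ * T) ≤ Real.exp ((α - 1) / α * sandwichedRenyiDiv α ρ σ) *
      retr (B.rpowH α') ^ (1 / α') :=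
    calc retr (ρ * T) = retr (A * B) := by
          rw [retr, retr, trace_sandwich_mul_sandwich hρ.isHermitian hσ hsupp T hexps]
      _ ≤ retr (A.rpowH α) ^ (1 / α) * retr (B.rpowH α') ^ (1 / α') :=
          (hρ.rpowH_mul_mul_rpowH hσ _).retr_mul_le_Lp_mul_Lq hB hconj
      _ ≤ _ := mul_le_mul_of_nonneg_right hexp (Real.rpow_nonneg (hB.rpowH α').retr_nonneg _)
  refine ⟨hbound, Real.mul_log_sub_log_le hTρ (hB.rpowH α').retr_nonneg hconj.symm.pos ?_⟩
  convert hbound using 4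
  rw [hα']; field_simp [hconj.ne_zero, hconj.sub_one_ne_zero]

/-- weighted-Hölder step towards the sandwiched variational bound.
For density operators `ρ, σ` with `supp ρ ⊆ supp σ`, `α > 1` with conjugate index
`α' = α/(α-1)`, and a positive semidefinite `T` with `Tr[ρT] > 0`:
`Tr[ρT] ≤ exp(((α-1)/α) D_α^*(ρ‖σ)) · (Tr[(σ^{1/(2α')} T σ^{1/(2α')})^{α'}])^{1/α'}`;
equivalently,
`D_α^*(ρ‖σ) ≥ α' log Tr[ρT] - log Tr[(σ^{1/(2α')} T σ^{1/(2α')})^{α'}]`. -/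
theorem sandwiched_holder_bound
    {ι : Type*} [Fintype ι] [DecidableEq ι]
    (ρ σ : Matrix ι ι ℂ)
    (hρ : ρ.PosSemidef) (hρtr : ρ.trace = 1)
    (hσ : σ.PosSemidef) (hσtr : σ.trace = 1)
    (hsupp : ∀ v : ι → ℂ, σ.mulVec v = 0 → ρ.mulVec v = 0)
    (α : ℝ) (hα : 1 < α) (α' : ℝ) (hα' : α' = α / (α - 1))
    (T : Matrix ι ι ℂ) (hT : T.PosSemidef) (hTρ : 0 < retr (ρ * T)) :
    retr (ρ * T) ≤
      Real.exp ((α - 1) / α * sandwichedRenyiDiv α ρ σ) *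
        (retr (Matrix.rpowH
          (Matrix.rpowH σ (1 / (2 * α')) * T * Matrix.rpowH σ (1 / (2 * α'))) α'))
          ^ (1 / α') ∧
    α' * Real.log (retr (ρ * T)) -
        Real.log (retr (Matrix.rpowH
          (Matrix.rpowH σ (1 / (2 * α')) * T * Matrix.rpowH σ (1 / (2 * α'))) α')) ≤
      sandwichedRenyiDiv α ρ σ :=
  sandwiched_holder_bound_general ρ σ hρ hσ hsupp α hα α' hα' T hT hTρ

end
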